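/- Let T be a lattice triangle with vertices O = (0,0), A, B whose circumcenter F is a lattice point, and suppose the lattice length ℓ_O of side AB is even. Then the orthocenter H of T lies in 2ℤ² (both coordinates even), and if θ is the (acute) angle of T at O, then tan θ ≤ ℓ_O/2. -/

import Mathlib

/-- Lattice length of the segment joining two lattice points. -/
def llen (P Q : ℤ × ℤ) : ℕ := Int.gcd (P.1 - Q.1) (P.2 - Q.2)

/-- Integer dot product on `ℤ × ℤ`. -/
def dotv (u v : ℤ × ℤ) : ℤ := u.1 * v.1 + u.2 * v.2

/-- The three vertices are not collinear (a genuine triangle). -/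
def Noncollinear (V₀ V₁ V₂ : ℤ × ℤ) : Prop :=
  (V₁.1 - V₀.1) * (V₂.2 - V₀.2) - (V₂.1 - V₀.1) * (V₁.2 - V₀.2) ≠ 0

/-- All three interior angles are strictly acute (positive dot products at each vertex). -/
def IsAcute (V₀ V₁ V₂ : ℤ × ℤ) : Prop :=
  0 < dotv (V₁ - V₀) (V₂ - V₀) ∧ 0 < dotv (V₀ - V₁) (V₂ - V₁) ∧
    0 < dotv (V₀ - V₂) (V₁ - V₂)

/-- `H` is the orthocenter of the triangle `V₀V₁V₂`. -/
def IsOrthocenter (H V₀ V₁ V₂ : ℤ × ℤ) : Prop :=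
  dotv (H - V₀) (V₁ - V₂) = 0 ∧ dotv (H - V₁) (V₂ - V₀) = 0 ∧
    dotv (H - V₂) (V₀ - V₁) = 0

/-- `F` is the circumcenter of the triangle `V₀V₁V₂` (equidistant from the vertices). -/
def IsCircumcenter (F V₀ V₁ V₂ : ℤ × ℤ) : Prop :=
  dotv (F - V₀) (F - V₀) = dotv (F - V₁) (F - V₁) ∧
    dotv (F - V₀) (F - V₀) = dotv (F - V₂) (F - V₂)

/-- Lattice perimeter of a lattice triangle. -/
def latPerim (V₀ V₁ V₂ : ℤ × ℤ) : ℕ := llen V₀ V₁ + llen V₁ V₂ + llen V₀ V₂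

/-- The interior angle of the triangle at vertex `V`, with the other vertices `A`, `B`. -/
noncomputable def angleAt (V A B : ℤ × ℤ) : ℝ :=
  Real.arccos ((((A.1 - V.1) * (B.1 - V.1) + (A.2 - V.2) * (B.2 - V.2) : ℤ) : ℝ) /
    (Real.sqrt (((A.1 - V.1) ^ 2 + (A.2 - V.2) ^ 2 : ℤ)) *
      Real.sqrt (((B.1 - V.1) ^ 2 + (B.2 - V.2) ^ 2 : ℤ))))

/-!
Put `w = A - B` and `H = A + B - 2F`, the orthocenter. Because `F` is the circumcenter,
`H ⊥ w` and `(A × B) (w × H) = (A · B) |w|²`. Writing `w = ℓ u` with `ℓ = ℓ_O` and `u`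
primitive, orthogonality forces `H = t u⊥`, so `|t|` is the lattice length of `OH` and the
identity reads `(A × B) t = (A · B) ℓ`, i.e. `tan θ = ℓ / |t|`. If `ℓ` is even then
`A ≡ B (mod 2)`, hence `H ≡ 0 (mod 2)`, `|t|` is even, and `|t| ≥ 2`.
-/

open Real

def crossv (u v : ℤ × ℤ) : ℤ := u.1 * v.2 - u.2 * v.1

lemma dotv_self_nonneg (u : ℤ × ℤ) : 0 ≤ dotv u u :=
  add_nonneg (mul_self_nonneg u.1) (mul_self_nonneg u.2)

lemma exists_eq_mul_of_isCoprime_of_mul_add_mul_eq_zero {p q x y : ℤ} (hpq : IsCoprime p q)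
    (h : p * x + q * y = 0) : ∃ t, x = -(q * t) ∧ y = p * t := by
  obtain ⟨a, b, hab⟩ := hpq
  exact ⟨a * y - b * x, by linear_combination a * h - x * hab,
    by linear_combination b * h - y * hab⟩

lemma abs_mul_gcd_eq_abs_mul_gcd {w h : ℤ × ℤ} {c d : ℤ} (hw : w ≠ 0)
    (hperp : dotv w h = 0) (hcross : c * crossv w h = d * dotv w w) :
    |c| * h.1.gcd h.2 = |d| * w.1.gcd w.2 := by
  obtain ⟨w₁, w₂⟩ := w
  obtain ⟨h₁, h₂⟩ := h
  simp only [dotv, crossv, ne_eq, Prod.mk_eq_zero, not_and_or] at *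
  obtain ⟨p, q, hpq, hp, hq⟩ := Int.exists_gcd_one (Int.gcd_pos_iff.mpr hw)
  have hℓ : (0 : ℤ) < w₁.gcd w₂ := mod_cast Int.gcd_pos_iff.mpr hw
  generalize (w₁.gcd w₂ : ℤ) = ℓ at *
  subst hp hq
  have hpq₀ : 0 < p ^ 2 + q ^ 2 := by
    rcases Int.gcd_pos_iff.mp (hpq ▸ one_pos) with h | h <;> positivity
  obtain ⟨t, rfl, rfl⟩ : ∃ t, h₁ = -(q * t) ∧ h₂ = p * t := by
    refine exists_eq_mul_of_isCoprime_of_mul_add_mul_eq_zero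
      (Int.isCoprime_iff_gcd_eq_one.mpr hpq) (mul_left_cancel₀ hℓ.ne' ?_)
    linear_combination hperp
  have hct : c * t = d * ℓ := by
    refine mul_left_cancel₀ (mul_pos hℓ hpq₀).ne' ?_
    linear_combination hcross
  rw [Int.neg_gcd, Int.gcd_mul_right, Int.gcd_comm, hpq, Nat.cast_mul, Nat.cast_one, one_mul,
    Int.natCast_natAbs, ← abs_mul, hct, abs_mul, abs_of_pos hℓ]

lemma isCircumcenter_origin_iff {F A B : ℤ × ℤ} :
    IsCircumcenter F (0, 0) A B ↔ 2 * dotv F A = dotv A A ∧ 2 * dotv F B = dotv B B := by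
  simp only [IsCircumcenter, dotv, Prod.fst_sub, Prod.snd_sub, sub_zero]
  constructor <;> rintro ⟨hA, hB⟩ <;>
    exact ⟨by linear_combination hA, by linear_combination hB⟩

section Orthocenter

variable {F A B : ℤ × ℤ} (hA : 2 * dotv F A = dotv A A) (hB : 2 * dotv F B = dotv B B)
include hA hB

lemma dotv_sub_orthocenter : dotv (A - B) (A + B - (2 : ℤ) • F) = 0 := by
  simp only [dotv, Prod.fst_sub, Prod.snd_sub, Prod.fst_add, Prod.snd_add, Prod.smul_fst,
    Prod.smul_snd] at *
  linear_combination hB - hA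

lemma crossv_mul_crossv_sub_orthocenter :
    crossv A B * crossv (A - B) (A + B - (2 : ℤ) • F) = dotv A B * dotv (A - B) (A - B) := by
  simp only [dotv, crossv, Prod.fst_sub, Prod.snd_sub, Prod.fst_add, Prod.snd_add,
    Prod.smul_fst, Prod.smul_snd] at *
  linear_combination (A.1 * B.1 + A.2 * B.2 - (B.1 * B.1 + B.2 * B.2)) * hA +
    (A.1 * B.1 + A.2 * B.2 - (A.1 * A.1 + A.2 * A.2)) * hB

end Orthocenter

lemma two_dvd_sub_of_even_llen {A B : ℤ × ℤ} (hev : Even (llen A B)) :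
    2 ∣ A.1 - B.1 ∧ 2 ∣ A.2 - B.2 := by
  have h2 : (2 : ℤ) ∣ llen A B := by exact_mod_cast hev.two_dvd
  exact ⟨h2.trans (Int.gcd_dvd_left _ _), h2.trans (Int.gcd_dvd_right _ _)⟩

lemma two_mul_abs_crossv_le {F A B : ℤ × ℤ} (hAB : A ≠ B) (hA : 2 * dotv F A = dotv A A)
    (hB : 2 * dotv F B = dotv B B) (hev : Even (llen A B)) (hd : 0 < dotv A B) :
    2 * |crossv A B| ≤ llen A B * dotv A B := by
  set H := A + B - (2 : ℤ) • F
  have key : |crossv A B| * H.1.gcd H.2 = dotv A B * llen A B := by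
    rw [← abs_of_pos hd]
    exact abs_mul_gcd_eq_abs_mul_gcd (sub_ne_zero.mpr hAB) (dotv_sub_orthocenter hA hB)
      (crossv_mul_crossv_sub_orthocenter hA hB)
  have hℓ : (0 : ℤ) < llen A B := by
    refine mod_cast Int.gcd_pos_iff.mpr ?_
    contrapose! hAB
    exact Prod.ext (sub_eq_zero.mp hAB.1) (sub_eq_zero.mp hAB.2)
  have hH : (2 : ℤ) ∣ H.1.gcd H.2 := by
    obtain ⟨h₁, h₂⟩ := two_dvd_sub_of_even_llen hev
    apply Int.dvd_coe_gcd <;> simp only [H, Prod.fst_sub, Prod.snd_sub, Prod.fst_add,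
      Prod.snd_add, Prod.smul_fst, Prod.smul_snd, smul_eq_mul] <;> omega
  have hH₂ : (2 : ℤ) ≤ H.1.gcd H.2 := by
    refine Int.le_of_dvd (lt_of_le_of_ne (Int.natCast_nonneg _) fun h ↦ ?_) hH
    rw [← h, mul_zero] at key
    exact (mul_pos hd hℓ).ne key
  calc 2 * |crossv A B| ≤ |crossv A B| * H.1.gcd H.2 := by
        rw [mul_comm]; exact mul_le_mul_of_nonneg_left hH₂ (abs_nonneg _)
    _ = llen A B * dotv A B := by rw [key, mul_comm]

lemma tan_arccos_nonpos {x : ℝ} (hx : x ≤ 0) : tan (arccos x) ≤ 0 := by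
  rw [tan_arccos]
  exact div_nonpos_of_nonneg_of_nonpos (sqrt_nonneg _) hx

lemma tan_arccos_div_sqrt_mul_sqrt {a b c d : ℝ} (ha : 0 ≤ a) (hb : 0 ≤ b) (hd : 0 < d)
    (h : d ^ 2 + c ^ 2 = a * b) : tan (arccos (d / (√a * √b))) = |c| / d := by
  have hab : 0 < √a * √b := by
    rw [← sqrt_mul ha]; exact sqrt_pos.mpr (by nlinarith)
  have : 1 - (d / (√a * √b)) ^ 2 = (c / (√a * √b)) ^ 2 := by
    rw [div_pow, div_pow, mul_pow, sq_sqrt ha, sq_sqrt hb, ← h]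
    field_simp
    ring
  rw [tan_arccos, this, sqrt_sq_eq_abs, abs_div, abs_of_pos hab,
    div_div_div_cancel_right₀ hab.ne']

lemma angleAt_origin (A B : ℤ × ℤ) :
    angleAt (0, 0) A B = arccos (dotv A B / (√(dotv A A) * √(dotv B B))) := by
  simp [angleAt, dotv, sq]

theorem stmt11 (A B F : ℤ × ℤ) (hT : Noncollinear (0, 0) A B)
    (hF : IsCircumcenter F (0, 0) A B) (hev : Even (llen A B)) :
    (Even (A.1 + B.1 - 2 * F.1) ∧ Even (A.2 + B.2 - 2 * F.2)) ∧
    Real.tan (angleAt (0, 0) A B) ≤ (llen A B : ℝ) / 2 := by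
  obtain ⟨hA, hB⟩ := isCircumcenter_origin_iff.mp hF
  obtain ⟨h₁, h₂⟩ := two_dvd_sub_of_even_llen hev
  refine ⟨⟨even_iff_two_dvd.mpr (by omega), even_iff_two_dvd.mpr (by omega)⟩, ?_⟩
  have hAA : (0 : ℝ) ≤ dotv A A := mod_cast dotv_self_nonneg A
  have hBB : (0 : ℝ) ≤ dotv B B := mod_cast dotv_self_nonneg B
  rw [angleAt_origin]
  rcases le_or_gt (dotv A B) 0 with hd | hd
  · exact (tan_arccos_nonpos (div_nonpos_of_nonpos_of_nonneg (mod_cast hd) (by positivity))).trans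
      (by positivity)
  · have hAB : A ≠ B := by
      rintro rfl
      exact hT (by ring)
    have hlag : (dotv A B : ℝ) ^ 2 + (crossv A B : ℝ) ^ 2 = dotv A A * dotv B B := by
      simp only [dotv, crossv]; push_cast; ring
    rw [tan_arccos_div_sqrt_mul_sqrt hAA hBB (by exact_mod_cast hd) hlag,
      div_le_div_iff₀ (by exact_mod_cast hd) two_pos]
    exact_mod_cast (mul_comm _ _).trans_le (two_mul_abs_crossv_le hAB hA hB hev hd)
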